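/- arXiv:1102.0580 — 4 statements merged into one kernel-verified Lean document; each statement's English description precedes it below -/
import Mathlib

section
/- Let G be a tensor whose characteristic matrix is block lower triangular: G(s) = [[G1(s), 0],[G2(s), G3(s)]], where G1 and G3 are nondegenerate characteristic matrices. Then R[G] ≥ R[G1] + (column rank of G3(s)) and R[G] ≥ R[G3] + (row rank of G1(s)). -/
open scoped BigOperators

noncomputable def tRank (F : Type) [Field F] {I J K : Type} [Fintype I] [Fintype J] [Fintype K]
    (A : I → J → K → F) : ℕ :=
  sInf {m | ∃ x : Fin m → I → F, ∃ y : Fin m → J → F, ∃ z : Fin m → K → F,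
    ∀ i j k, A i j k = ∑ t, x t i * y t j * z t k}

noncomputable def charMatrix {F : Type} [Field F] {I J K : Type} [Fintype K]
    (A : I → J → K → F) : Matrix I J (MvPolynomial K F) :=
  Matrix.of fun i j => ∑ k, MvPolynomial.X k * MvPolynomial.C (A i j k)

noncomputable def colRank (F : Type) [Field F] {I J K : Type} [Fintype I] [Fintype J] [Fintype K]
    (A : I → J → K → F) : ℕ :=
  ((charMatrix A).map
    (algebraMap (MvPolynomial K F) (FractionRing (MvPolynomial K F)))).rank

noncomputable def rowRank (F : Type) [Field F] {I J K : Type} [Fintype I] [Fintype J] [Fintype K]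
    (A : I → J → K → F) : ℕ :=
  (((charMatrix A).transpose).map
    (algebraMap (MvPolynomial K F) (FractionRing (MvPolynomial K F)))).rank

/-- A tensor is nondegenerate if no nontrivial linear combination of its slices vanishes
and its characteristic matrix has full row and column rank. -/
def Nondeg (F : Type) [Field F] {I J K : Type} [Fintype I] [Fintype J] [Fintype K]
    (A : I → J → K → F) : Prop :=
  (∀ c : K → F, (∀ i j, ∑ k, c k * A i j k = 0) → c = 0) ∧
  rowRank F A = Fintype.card I ∧ colRank F A = Fintype.card J


/-!
Substitution method. Take a decomposition `G = ∑ₜ xₜ ⊗ yₜ ⊗ zₜ` of minimal length `m` and split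
`xₜ = (x¹ₜ, x²ₜ)`, `yₜ = (y¹ₜ, y²ₜ)` along the blocks; the zero block says
`∑ₜ (x¹ₜ ⊗ zₜ) ⊗ y²ₜ = 0`. Let `(y²_τ)_{τ ∈ T}` be a basis of `span {y²ₜ}` and write
`y²ₜ = ∑_τ c_{tτ} y²_τ`. By independence, `x¹_τ ⊗ z_τ = -∑_{t ∉ T} c_{tτ} x¹ₜ ⊗ zₜ` for `τ ∈ T`,
hence `G1 = ∑_{t ∉ T} x¹ₜ ⊗ (y¹ₜ - ∑_τ c_{tτ} y¹_τ) ⊗ zₜ` has rank at most `m - |T|`. On the other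
hand every row of `G3(s) = ∑ₜ ⟨zₜ, s⟩ x²ₜ (y²ₜ)ᵀ` lies in the span of the `y²ₜ`, so its column rank
is at most `|T|`. The second inequality is the first one for the transposed blocks.
-/

section LinearAlgebra

open Finset

variable {R ι : Type*} [Ring R] [Fintype ι] [DecidableEq ι]

theorem sum_smul_sub_sum_compl_smul {N : Type*} [AddCommGroup N] [Module R N] (T : Finset ι)
    (c : ι → T → R) (r : ι → R) (w : ι → N) :
    ∑ t, r t • w t - ∑ t ∈ Tᶜ, r t • (w t - ∑ τ, c t τ • w τ) =
      ∑ τ : T, (r τ + ∑ t ∈ Tᶜ, r t * c t τ) • w τ := by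
  rw [← sum_add_sum_compl T, ← sum_coe_sort T]
  simp only [smul_sub, sum_sub_distrib, smul_sum, smul_smul, add_smul, sum_add_distrib, sum_smul]
  rw [sum_comm (s := Tᶜ)]
  abel

theorem sum_smul_eq_sum_compl_of_sum_smul_eq_zero {M V : Type*} [AddCommGroup M] [Module R M]
    [AddCommGroup V] [Module R V] {v : ι → V} {T : Finset ι}
    (hT : LinearIndependent R fun τ : T ↦ v τ) {c : ι → T → R}
    (hc : ∀ t, ∑ τ, c t τ • v τ = v t) {r : ι → R} (hr : ∑ t, r t • v t = 0) (u : ι → M) :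
    ∑ t, r t • u t = ∑ t ∈ Tᶜ, r t • (u t - ∑ τ, c t τ • u τ) := by
  have hcoeff : ∀ τ : T, r τ + ∑ t ∈ Tᶜ, r t * c t τ = 0 := by
    refine Fintype.linearIndependent_iff.1 hT _ ?_
    rw [← sum_smul_sub_sum_compl_smul, hr]
    simp only [hc, sub_self, smul_zero, sum_const_zero]
  rw [← sub_eq_zero, sum_smul_sub_sum_compl_smul]
  simp [hcoeff]

end LinearAlgebra

theorem exists_finset_linearIndependent_span_eq {K V ι : Type*} [DivisionRing K] [AddCommGroup V]
    [Module K V] [Finite ι] (v : ι → V) :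
    ∃ T : Finset ι, (LinearIndependent K fun τ : T ↦ v τ) ∧
      Submodule.span K (Set.range fun τ : T ↦ v τ) = Submodule.span K (Set.range v) := by
  classical
  have := Fintype.ofFinite ι
  obtain ⟨S, -, -, hspan, hS⟩ :=
    exists_linearIndepOn_extension (linearIndepOn_empty K v) (Set.empty_subset Set.univ)
  refine ⟨S.toFinset, hS.comp (fun τ : S.toFinset ↦ ⟨τ, Set.mem_toFinset.1 τ.2⟩) fun _ _ h ↦
    Subtype.ext (congrArg Subtype.val h :), le_antisymm (Submodule.span_mono ?_) ?_⟩
  · exact Set.range_comp_subset_range _ v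
  · rw [Submodule.span_le, ← Set.image_univ]
    refine hspan.trans (Submodule.span_mono ?_)
    rintro _ ⟨t, ht, rfl⟩
    exact ⟨⟨t, by simpa using ht⟩, rfl⟩

section TensorRank

variable {F : Type} [Field F] {I J K : Type}

theorem exists_fin_decomposition {ι : Type*} [Fintype ι] {A : I → J → K → F}
    (x : ι → I → F) (y : ι → J → F) (z : ι → K → F)
    (h : ∀ i j k, A i j k = ∑ t, x t i * y t j * z t k) :
    ∃ (x' : Fin (Fintype.card ι) → I → F) (y' : Fin (Fintype.card ι) → J → F)
      (z' : Fin (Fintype.card ι) → K → F), ∀ i j k, A i j k = ∑ t, x' t i * y' t j * z' t k := by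
  let e := (Fintype.equivFin ι).symm
  exact ⟨x ∘ e, y ∘ e, z ∘ e, fun i j k ↦ by
    rw [h]; exact (Equiv.sum_comp e fun t ↦ x t i * y t j * z t k).symm⟩

variable [Fintype I] [Fintype J] [Fintype K]

theorem tRank_le_card {ι : Type*} [Fintype ι] {A : I → J → K → F}
    (x : ι → I → F) (y : ι → J → F) (z : ι → K → F)
    (h : ∀ i j k, A i j k = ∑ t, x t i * y t j * z t k) : tRank F A ≤ Fintype.card ι :=
  Nat.sInf_le (exists_fin_decomposition x y z h)

theorem exists_decomposition_tRank (A : I → J → K → F) :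
    ∃ (x : Fin (tRank F A) → I → F) (y : Fin (tRank F A) → J → F) (z : Fin (tRank F A) → K → F),
      ∀ i j k, A i j k = ∑ t, x t i * y t j * z t k := by
  classical
  apply Nat.sInf_mem (s := {m | ∃ (x : Fin m → I → F) (y : Fin m → J → F) (z : Fin m → K → F),
    ∀ i j k, A i j k = ∑ t, x t i * y t j * z t k})
  refine ⟨_, exists_fin_decomposition (A := A) (ι := I × J) (fun t ↦ Pi.single t.1 1)
    (fun t ↦ Pi.single t.2 1) (fun t ↦ A t.1 t.2) fun i j k ↦ ?_⟩
  simp [Fintype.sum_prod_type, Pi.single_apply]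

theorem tRank_swap (A : I → J → K → F) : tRank F (fun j i k ↦ A i j k) = tRank F A := by
  obtain ⟨x, y, z, h⟩ := exists_decomposition_tRank A
  obtain ⟨x', y', z', h'⟩ := exists_decomposition_tRank fun j i k ↦ A i j k
  refine le_antisymm ?_ ?_
  · simpa using tRank_le_card y x z fun j i k ↦ by simp_rw [h, mul_comm (y _ _)]
  · simpa using tRank_le_card y' x' z' fun i j k ↦ by simp_rw [h' j i k, mul_comm (y' _ _)]

theorem rowRank_eq_colRank_swap (A : I → J → K → F) :
    rowRank F A = colRank F (fun j i k ↦ A i j k) := rfl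

end TensorRank

section CharMatrixRank

open MvPolynomial Module Submodule

variable {F : Type} [Field F] {I J K : Type} [Fintype K]

theorem charMatrix_eq_mul_of_eq_sum_mul {D : Type} [Fintype D] {A : I → J → K → F}
    (P : I → D → K → F) (w : D → J → F) (h : ∀ i j k, A i j k = ∑ d, P i d k * w d j) :
    charMatrix A =
      charMatrix P * (Matrix.of fun d j ↦ C (w d j) : Matrix D J (MvPolynomial K F)) := by
  ext i j
  simp only [charMatrix, Matrix.mul_apply, Matrix.of_apply, h, map_sum, map_mul, Finset.mul_sum,
    Finset.sum_mul]
  rw [Finset.sum_comm]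
  simp only [mul_assoc]

variable [Fintype I] [Fintype J]

theorem colRank_le_of_eq_sum_mul {D : Type} [Fintype D] {A : I → J → K → F}
    (P : I → D → K → F) (w : D → J → F) (h : ∀ i j k, A i j k = ∑ d, P i d k * w d j) :
    colRank F A ≤ Fintype.card D := by
  rw [colRank, charMatrix_eq_mul_of_eq_sum_mul P w h, Matrix.map_mul]
  exact (Matrix.rank_mul_le_right _ _).trans (Matrix.rank_le_card_height _)

theorem colRank_le_finrank_span {ι : Type*} [Fintype ι] {A : I → J → K → F}
    (x : ι → I → F) (y : ι → J → F) (z : ι → K → F)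
    (h : ∀ i j k, A i j k = ∑ t, x t i * y t j * z t k) :
    colRank F A ≤ finrank F (span F (Set.range y)) := by
  set b := finBasis F (span F (Set.range y))
  have hy : ∀ t j, y t j = ∑ d, b.repr ⟨y t, subset_span ⟨t, rfl⟩⟩ d * (b d : J → F) j := by
    intro t j
    have := congrFun (congrArg Subtype.val (b.sum_repr ⟨y t, subset_span ⟨t, rfl⟩⟩)) j
    simp only [Submodule.coe_sum, Submodule.coe_smul, Finset.sum_apply, Pi.smul_apply,
      smul_eq_mul] at this
    exact this.symm
  refine (colRank_le_of_eq_sum_mul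
    (fun i d k ↦ ∑ t, x t i * z t k * b.repr ⟨y t, subset_span ⟨t, rfl⟩⟩ d)
    (fun d ↦ (b d : J → F)) fun i j k ↦ ?_).trans (Fintype.card_fin _).le
  simp only [h, hy, Finset.mul_sum, Finset.sum_mul]
  rw [Finset.sum_comm]
  exact Finset.sum_congr rfl fun d _ ↦ Finset.sum_congr rfl fun t _ ↦ by ring

end CharMatrixRank

open Module Submodule in
theorem tRank_add_finrank_span_le {F : Type} [Field F] {I J K : Type} {J' ι : Type*} [Fintype I]
    [Fintype J] [Fintype K] [Fintype ι] {A : I → J → K → F}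
    (p : ι → I → F) (u : ι → J → F) (v : ι → J' → F) (z : ι → K → F)
    (hA : ∀ i j k, A i j k = ∑ t, p t i * u t j * z t k)
    (hv : ∀ i j k, ∑ t, p t i * v t j * z t k = 0) :
    tRank F A + finrank F (span F (Set.range v)) ≤ Fintype.card ι := by
  classical
  obtain ⟨T, hT, hspan⟩ := exists_finset_linearIndependent_span_eq (K := F) v
  choose c hc using fun t ↦ (mem_span_range_iff_exists_fun F).1
    (hspan ▸ subset_span ⟨t, rfl⟩ : v t ∈ span F (Set.range fun τ : T ↦ v τ))
  have hA' : ∀ i j k, A i j k = ∑ t : (Tᶜ : Finset ι),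
      p t i * (u t j - ∑ τ, c t τ * u τ j) * z t k := by
    intro i j k
    have hr : ∑ t, (p t i * z t k) • v t = 0 := funext fun j' ↦ by
      simpa [mul_right_comm] using hv i j' k
    have := sum_smul_eq_sum_compl_of_sum_smul_eq_zero hT hc hr fun t ↦ u t j
    simp only [smul_eq_mul] at this
    rw [hA, Finset.sum_coe_sort Tᶜ fun t ↦ p t i * (u t j - ∑ τ, c t τ * u τ j) * z t k]
    convert this using 2 <;> ring
  have hrank := tRank_le_card _ _ _ hA'
  rw [← hspan, finrank_span_eq_card hT]
  simp only [Fintype.card_coe, Finset.card_compl] at hrank ⊢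
  have := T.card_le_univ
  omega

theorem tRank_add_colRank_le_card {F : Type} [Field F] {I₁ J₁ I₂ J₂ K : Type} {ι : Type*}
    [Fintype I₁] [Fintype J₁] [Fintype I₂] [Fintype J₂] [Fintype K] [Fintype ι]
    {A₁ : I₁ → J₁ → K → F} {A₃ : I₂ → J₂ → K → F}
    (x₁ : ι → I₁ → F) (y₁ : ι → J₁ → F) (x₂ : ι → I₂ → F) (y₂ : ι → J₂ → F) (z : ι → K → F)
    (h₁ : ∀ i j k, A₁ i j k = ∑ t, x₁ t i * y₁ t j * z t k)
    (h₀ : ∀ i j k, ∑ t, x₁ t i * y₂ t j * z t k = 0)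
    (h₃ : ∀ i j k, A₃ i j k = ∑ t, x₂ t i * y₂ t j * z t k) :
    tRank F A₁ + colRank F A₃ ≤ Fintype.card ι :=
  (Nat.add_le_add_left (colRank_le_finrank_span x₂ y₂ z h₃) _).trans
    (tRank_add_finrank_span_le x₁ y₁ y₂ z h₁ h₀)

theorem rank_block_lower_triangular_general (F : Type) [Field F] {a a' b b' c : ℕ}
    (G1 : Fin a → Fin b → Fin c → F) (G2 : Fin a' → Fin b → Fin c → F)
    (G3 : Fin a' → Fin b' → Fin c → F) :
    tRank F G1 + colRank F G3 ≤
      tRank F (fun (i : Fin (a + a')) (j : Fin (b + b')) (k : Fin c) =>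
        Fin.addCases
          (fun i1 => Fin.addCases (fun j1 => G1 i1 j1 k) (fun _ => (0 : F)) j)
          (fun i2 => Fin.addCases (fun j1 => G2 i2 j1 k) (fun j2 => G3 i2 j2 k) j) i) ∧
    tRank F G3 + rowRank F G1 ≤
      tRank F (fun (i : Fin (a + a')) (j : Fin (b + b')) (k : Fin c) =>
        Fin.addCases
          (fun i1 => Fin.addCases (fun j1 => G1 i1 j1 k) (fun _ => (0 : F)) j)
          (fun i2 => Fin.addCases (fun j1 => G2 i2 j1 k) (fun j2 => G3 i2 j2 k) j) i) := by
  set G : Fin (a + a') → Fin (b + b') → Fin c → F := fun i j k ↦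
    Fin.addCases
      (fun i1 ↦ Fin.addCases (fun j1 ↦ G1 i1 j1 k) (fun _ ↦ (0 : F)) j)
      (fun i2 ↦ Fin.addCases (fun j1 ↦ G2 i2 j1 k) (fun j2 ↦ G3 i2 j2 k) j) i
  obtain ⟨x, y, z, hG⟩ := exists_decomposition_tRank G
  set x₁ := fun t i ↦ x t (Fin.castAdd a' i)
  set x₂ := fun t i ↦ x t (Fin.natAdd a i)
  set y₁ := fun t j ↦ y t (Fin.castAdd b' j)
  set y₂ := fun t j ↦ y t (Fin.natAdd b j)
  have hG1 : ∀ i j k, G1 i j k = ∑ t, x₁ t i * y₁ t j * z t k := fun i j k ↦ by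
    simpa [G] using hG (Fin.castAdd a' i) (Fin.castAdd b' j) k
  have hG3 : ∀ i j k, G3 i j k = ∑ t, x₂ t i * y₂ t j * z t k := fun i j k ↦ by
    simpa [G] using hG (Fin.natAdd a i) (Fin.natAdd b j) k
  have h0 : ∀ i j k, ∑ t, x₁ t i * y₂ t j * z t k = 0 := fun i j k ↦ by
    simpa [G] using (hG (Fin.castAdd a' i) (Fin.natAdd b j) k).symm
  refine ⟨(tRank_add_colRank_le_card x₁ y₁ x₂ y₂ z hG1 h0 hG3).trans_eq (Fintype.card_fin _), ?_⟩
  rw [← tRank_swap G3, rowRank_eq_colRank_swap]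
  refine (tRank_add_colRank_le_card y₂ x₂ y₁ x₁ z ?_ ?_ ?_).trans_eq (Fintype.card_fin _)
  · exact fun j i k ↦ by simp_rw [hG3, mul_comm (x₂ _ _)]
  · exact fun j i k ↦ by simp_rw [← h0 i j k, mul_comm (x₁ _ _)]
  · exact fun j i k ↦ by simp_rw [hG1, mul_comm (x₁ _ _)]

theorem rank_block_lower_triangular (F : Type) [Field F] {a a' b b' c : ℕ}
    (G1 : Fin a → Fin b → Fin c → F) (G2 : Fin a' → Fin b → Fin c → F)
    (G3 : Fin a' → Fin b' → Fin c → F)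
    (hG1 : Nondeg F G1) (hG3 : Nondeg F G3) :
    tRank F G1 + colRank F G3 ≤
      tRank F (fun (i : Fin (a + a')) (j : Fin (b + b')) (k : Fin c) =>
        Fin.addCases
          (fun i1 => Fin.addCases (fun j1 => G1 i1 j1 k) (fun _ => (0 : F)) j)
          (fun i2 => Fin.addCases (fun j1 => G2 i2 j1 k) (fun j2 => G3 i2 j2 k) j) i) ∧
    tRank F G3 + rowRank F G1 ≤
      tRank F (fun (i : Fin (a + a')) (j : Fin (b + b')) (k : Fin c) =>
        Fin.addCases
          (fun i1 => Fin.addCases (fun j1 => G1 i1 j1 k) (fun _ => (0 : F)) j)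
          (fun i2 => Fin.addCases (fun j1 => G2 i2 j1 k) (fun j2 => G3 i2 j2 k) j) i) :=
  rank_block_lower_triangular_general F G1 G2 G3
end

section
/- Define A^(0) = the n^{k-1} × n^{k-1} × 1 tensor whose single slice is the identity matrix I_{n^{k-1}}, and recursively A^(i+1) = [[A^(i) 0, 0 A^(i)],[0 A^(i), 0 0]] (a 2×2 block tensor where each block is a concatenation along the third axis, so A^(i+1) has dimensions 2^{i+1} n^{k-1} × 2^{i+1} n^{k-1} × 2^{i+1}). Then for every i, A^(i) is nondegenerate: no nontrivial linear combination of its 2^i slices vanishes, and its characteristic matrix has full row and column rank 2^i n^{k-1}. -/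
open scoped BigOperators

/-- Row/column index type of the recursive tensor `A^(i)`. -/
def ArecIdx (m : ℕ) : ℕ → Type
  | 0 => Fin m
  | (i+1) => Fin 2 × ArecIdx m i

/-- Slice index type of the recursive tensor `A^(i)`. -/
def ArecSl : ℕ → Type
  | 0 => Fin 1
  | (i+1) => Fin 2 × ArecSl i

instance instArecIdxFintype (m : ℕ) : (i : ℕ) → Fintype (ArecIdx m i)
  | 0 => inferInstanceAs (Fintype (Fin m))
  | (i+1) => @instFintypeProd _ _ _ (instArecIdxFintype m i)

instance instArecSlFintype : (i : ℕ) → Fintype (ArecSl i)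
  | 0 => inferInstanceAs (Fintype (Fin 1))
  | (i+1) => @instFintypeProd _ _ _ (instArecSlFintype i)

instance instArecIdxDecEq (m : ℕ) : (i : ℕ) → DecidableEq (ArecIdx m i)
  | 0 => inferInstanceAs (DecidableEq (Fin m))
  | (i+1) => @instDecidableEqProd _ _ _ (instArecIdxDecEq m i)

/-- The recursive tensor: `A^(0) = I_m` (one slice), and
`A^(i+1) = [[A^(i)(s), A^(i)(t)], [A^(i)(t), 0]]`, where the first component of the
slice index chooses between the `s`-variables (`0`) and the `t`-variables (`1`). -/
def Arec (F : Type) [Field F] (m : ℕ) : (i : ℕ) → ArecIdx m i → ArecIdx m i → ArecSl i → F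
  | 0 => fun r c _ => if r = c then (1 : F) else 0
  | (i+1) => fun rc cc el =>
      if el.1 = 0 then
        (if rc.1 = 0 ∧ cc.1 = 0 then Arec F m i rc.2 cc.2 el.2 else 0)
      else
        (if (rc.1 = 0 ∧ cc.1 = 1) ∨ (rc.1 = 1 ∧ cc.1 = 0) then Arec F m i rc.2 cc.2 el.2 else 0)


/-!
The slices of `A^(i+1)` indexed by `(b, e)` restrict, on the block row `0` and block column `b`,
to the slice `e` of `A^(i)` and vanish on the other blocks of that row; so a vanishing combination
of the slices of `A^(i+1)` yields, for each `b`, a vanishing combination of the slices of `A^(i)`.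

The characteristic matrix of `A^(i+1)` is `[[S, T], [T, 0]]`, where `S` and `T` are copies of the
characteristic matrix of `A^(i)` in disjoint sets of variables, so its determinant is `± (det T)²`.
By induction it is a nonzero polynomial, hence the characteristic matrix is invertible over the
fraction field and has full row and column rank.
-/

open MvPolynomial Matrix

lemma Matrix.det_map_ne_zero {n R S : Type*} [Fintype n] [DecidableEq n] [CommRing R] [CommRing S]
    {f : R →+* S} (hf : Function.Injective f) {M : Matrix n n R} (hM : M.det ≠ 0) :
    (M.map f).det ≠ 0 := by
  rw [← RingHom.mapMatrix_apply, ← RingHom.map_det]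
  exact (map_ne_zero_iff f hf).mpr hM

lemma Matrix.rank_map_fractionRing {n R : Type*} [Fintype n] [DecidableEq n] [CommRing R]
    [IsDomain R] {M : Matrix n n R} (hM : M.det ≠ 0) :
    (M.map (algebraMap R (FractionRing R))).rank = Fintype.card n :=
  rank_of_isUnit _ <| (isUnit_iff_isUnit_det _).mpr <| isUnit_iff_ne_zero.mpr <|
    det_map_ne_zero (IsFractionRing.injective R (FractionRing R)) hM

lemma Matrix.det_fromBlocks_zero₂₂_ne_zero {n R : Type*} [Fintype n] [DecidableEq n] [CommRing R]
    [NoZeroDivisors R] (A B C : Matrix n n R) (hB : B.det ≠ 0) (hC : C.det ≠ 0) :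
    (fromBlocks A B C 0).det ≠ 0 := by
  -- swapping the two block rows makes the matrix block lower triangular
  have hswap := det_permute (Equiv.sumComm n n) (fromBlocks A B C 0)
  rw [Equiv.sumComm_apply, fromBlocks_submatrix_sum_swap_left, submatrix_id_id,
    det_fromBlocks_zero₁₂] at hswap
  intro h
  rw [h, mul_zero] at hswap
  exact mul_ne_zero hC hB hswap

def Equiv.finTwoProdEquivSum (α : Type*) : Fin 2 × α ≃ α ⊕ α where
  toFun p := if p.1 = 0 then Sum.inl p.2 else Sum.inr p.2
  invFun := Sum.elim (Prod.mk 0) (Prod.mk 1)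
  left_inv := by rintro ⟨b, a⟩; fin_cases b <;> rfl
  right_inv := by rintro (a | a) <;> rfl

section

variable {F : Type} [Field F] {I K : Type}

def SlicesIndependent {J : Type} [Fintype K] (A : I → J → K → F) : Prop :=
  ∀ c : K → F, (∀ i j, ∑ k, c k * A i j k = 0) → c = 0

/-- The successor clause of `Arec` over arbitrary index types: `Arec F m (i + 1)` is
definitionally `arecStep (Arec F m i)`. -/
def arecStep (A : I → I → K → F) : Fin 2 × I → Fin 2 × I → Fin 2 × K → F :=
  fun rc cc el =>
    if el.1 = 0 then
      (if rc.1 = 0 ∧ cc.1 = 0 then A rc.2 cc.2 el.2 else 0)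
    else
      (if (rc.1 = 0 ∧ cc.1 = 1) ∨ (rc.1 = 1 ∧ cc.1 = 0) then A rc.2 cc.2 el.2 else 0)

lemma slicesIndependent_identity [Nonempty I] [DecidableEq I] [Fintype K] [Unique K] :
    SlicesIndependent fun (r c : I) (_ : K) => if r = c then (1 : F) else 0 := by
  intro c h
  obtain ⟨r⟩ := ‹Nonempty I›
  funext k
  simpa [Unique.eq_default k] using h r r

lemma slicesIndependent_arecStep [Fintype K] {A : I → I → K → F} (hA : SlicesIndependent A) :
    SlicesIndependent (arecStep A) := by
  intro c h
  have hblock (b : Fin 2) : (fun k => c (b, k)) = 0 := hA _ fun r r' => by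
    have h0b := h (0, r) (b, r')
    rw [Fintype.sum_prod_type, Fin.sum_univ_two] at h0b
    fin_cases b <;> simpa [arecStep] using h0b
  funext ⟨b, k⟩
  exact congrFun (hblock b) k

lemma charMatrix_identity [DecidableEq I] [Fintype K] [Unique K] :
    (charMatrix fun (r c : I) (_ : K) => if r = c then (1 : F) else 0) =
      (X default : MvPolynomial K F) • 1 := by
  ext r c : 1
  rw [charMatrix, of_apply, Fintype.sum_unique, Matrix.smul_apply, smul_eq_mul, one_apply]
  split_ifs <;> simp

lemma det_charMatrix_identity_ne_zero [Fintype I] [DecidableEq I] [Fintype K] [Unique K] :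
    (charMatrix fun (r c : I) (_ : K) => if r = c then (1 : F) else 0).det ≠ 0 := by
  rw [charMatrix_identity, det_smul, det_one, mul_one]
  exact pow_ne_zero _ (X_ne_zero _)

lemma charMatrix_arecStep [Fintype K] (A : I → I → K → F) :
    charMatrix (arecStep A) =
      let S (b : Fin 2) := (charMatrix A).map (rename (Prod.mk b))
      (fromBlocks (S 0) (S 1) (S 1) 0).submatrix (Equiv.finTwoProdEquivSum I)
        (Equiv.finTwoProdEquivSum I) := by
  ext ⟨a, r⟩ ⟨b, c⟩ : 1
  rw [charMatrix, of_apply, Fintype.sum_prod_type, Fin.sum_univ_two]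
  fin_cases a <;> fin_cases b <;> simp [arecStep, Equiv.finTwoProdEquivSum, charMatrix]

lemma det_charMatrix_arecStep_ne_zero [Fintype I] [DecidableEq I] [Fintype K]
    {A : I → I → K → F} (hA : (charMatrix A).det ≠ 0) : (charMatrix (arecStep A)).det ≠ 0 := by
  have hS (b : Fin 2) := det_map_ne_zero (rename_injective _ (Prod.mk_right_injective b)) hA
  rw [charMatrix_arecStep, det_submatrix_equiv_self]
  exact det_fromBlocks_zero₂₂_ne_zero _ _ _ (hS 1) (hS 1)

lemma card_arecIdx (m : ℕ) : ∀ i, Fintype.card (ArecIdx m i) = 2 ^ i * m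
  | 0 => (Fintype.card_fin m).trans (one_mul m).symm
  | i + 1 => by
    rw [show Fintype.card (ArecIdx m (i + 1)) = Fintype.card (Fin 2 × ArecIdx m i) from rfl,
      Fintype.card_prod, card_arecIdx m i, Fintype.card_fin, pow_succ]
    ring

variable (F)

lemma slicesIndependent_arec {m : ℕ} (hm : 0 < m) : ∀ i, SlicesIndependent (Arec F m i)
  | 0 =>
    have : Nonempty (Fin m) := ⟨⟨0, hm⟩⟩
    slicesIndependent_identity (I := Fin m) (K := Fin 1)
  | i + 1 => slicesIndependent_arecStep (slicesIndependent_arec hm i)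

lemma det_charMatrix_arec_ne_zero (m : ℕ) : ∀ i, (charMatrix (Arec F m i)).det ≠ 0
  | 0 => det_charMatrix_identity_ne_zero (K := Fin 1)
  | i + 1 => det_charMatrix_arecStep_ne_zero (det_charMatrix_arec_ne_zero m i)

end

theorem arec_nondegenerate (F : Type) [Field F] (n k : ℕ) (hn : 1 ≤ n) (i : ℕ) :
    (∀ c : ArecSl i → F,
        (∀ r r' : ArecIdx (n ^ (k - 1)) i, ∑ e, c e * Arec F (n ^ (k - 1)) i r r' e = 0) →
        c = 0) ∧
    rowRank F (Arec F (n ^ (k - 1)) i) = 2 ^ i * n ^ (k - 1) ∧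
    colRank F (Arec F (n ^ (k - 1)) i) = 2 ^ i * n ^ (k - 1) := by
  have hdet := det_charMatrix_arec_ne_zero F (n ^ (k - 1)) i
  refine ⟨slicesIndependent_arec F (Nat.pow_pos hn) i, ?_, ?_⟩
  · rw [rowRank, rank_map_fractionRing (by rwa [det_transpose]), card_arecIdx]
  · rw [colRank, rank_map_fractionRing hdet, card_arecIdx]
end

section
/- For n a power of 2 and l = log₂ n, the recursively defined tensor A^(l) (starting from A^(0) = I_{n^{k-1}} and doubling via the block construction) is an n^k × n^k × n tensor with R[A^(l)] ≥ 2n^k − n^{k-1}. -/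
open scoped BigOperators

/-!
The lower bound is proved by the substitution method. If the rows `T a`, `a ∈ s`, of a tensor
`T` are linearly independent, a decomposition into `r` rank-one terms can be turned, one row at
a time, into a decomposition with `r - |s|` terms of a tensor obtained from `T` by adding
combinations of these rows to the other rows.

In `A^(i+1)` the `N = m 2^i` rows of the lower block are independent: restricted to the
left columns and the `t`-slices they are the rows of `A^(i)`. Eliminating them changes nothing
on the right columns nor on the `s`-slices of the left columns. The `N` right columns of the
upper block are independent for the same reason (`A^(i)` is symmetric), and eliminating them
leaves `A^(i)` on the `s`-slices of the upper left block. Hence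
`R[A^(i+1)] ≥ 2N + R[A^(i)]`, and with `R[A^(0)] ≥ m` this gives `R[A^(l)] ≥ 2 m 2^l - m`.
-/

open Submodule Set

section Decomposition

variable {F I J K : Type*}

/-- `tRank F T` is the least `r` with `HasDecomp T r`. -/
def HasDecomp [CommSemiring F] (T : I → J → K → F) (r : ℕ) : Prop :=
  ∃ x : Fin r → I → F, ∃ y : Fin r → J → F, ∃ z : Fin r → K → F,
    ∀ i j k, T i j k = ∑ t, x t i * y t j * z t k

section CommSemiring

variable [CommSemiring F] {T : I → J → K → F} {r : ℕ}

theorem hasDecomp_of_fintype {τ : Type*} [Fintype τ] (x : τ → I → F) (y : τ → J → F)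
    (z : τ → K → F) (h : ∀ i j k, T i j k = ∑ t, x t i * y t j * z t k) :
    HasDecomp T (Fintype.card τ) := by
  let e := (Fintype.equivFin τ).symm
  exact ⟨fun t => x (e t), fun t => y (e t), fun t => z (e t), fun i j k =>
    (h i j k).trans (e.sum_comp fun t => x t i * y t j * z t k).symm⟩

theorem hasDecomp_card_prod [Fintype I] [Fintype K] (T : I → J → K → F) :
    HasDecomp T (Fintype.card (I × K)) := by
  classical
  exact hasDecomp_of_fintype (fun t i => if t.1 = i then 1 else 0) (fun t j => T t.1 j t.2)
    (fun t k => if t.2 = k then 1 else 0) fun i j k => by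
      simp [Fintype.sum_prod_type, ite_mul, mul_ite]

theorem HasDecomp.comp {I' J' K' : Type*} (h : HasDecomp T r) (f : I' → I) (g : J' → J)
    (e : K' → K) : HasDecomp (fun i j k => T (f i) (g j) (e k)) r := by
  obtain ⟨x, y, z, hT⟩ := h
  exact ⟨fun t i => x t (f i), fun t j => y t (g j), fun t k => z t (e k), fun i j k => hT _ _ _⟩

theorem HasDecomp.swap (h : HasDecomp T r) : HasDecomp (fun j i k => T i j k) r := by
  obtain ⟨x, y, z, hT⟩ := h
  exact ⟨y, x, z, fun j i k => by simp only [hT, mul_comm (x _ i)]⟩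

end CommSemiring

theorem Fintype.linearIndependent_iff₂ [Ring F] {ι : Type*} [Fintype ι] {v : ι → J → K → F} :
    LinearIndependent F v ↔ ∀ c : ι → F, (∀ j k, ∑ a, c a * v a j k = 0) → ∀ a, c a = 0 := by
  simp only [Fintype.linearIndependent_iff, funext_iff, Finset.sum_apply, Pi.smul_apply,
    smul_eq_mul, Pi.zero_apply]

theorem apply_apply_eq_of_sub_mem_span [Ring F] {ι : Type*} {v : ι → J → K → F} {j : J} {k : K}
    (hv : ∀ a, v a j k = 0) {w w' : J → K → F} (hw : w - w' ∈ span F (range v)) :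
    w j k = w' j k := by
  let φ : (J → K → F) →ₗ[F] F :=
    (LinearMap.proj (R := F) (φ := fun _ : K => F) k).comp (LinearMap.proj j)
  have : w - w' ∈ LinearMap.ker φ := span_le.mpr (range_subset_iff.mpr hv) hw
  simpa [φ, sub_eq_zero] using this

section Field

variable [Field F] {T : I → J → K → F} {r : ℕ}

theorem HasDecomp.exists_sub_one_of_ne_zero {i₀ : I} (h : HasDecomp T r) (hi₀ : T i₀ ≠ 0) :
    1 ≤ r ∧ ∃ μ : I → F, HasDecomp (fun i => T i + μ i • T i₀) (r - 1) := by
  classical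
  obtain ⟨x, y, z, hT⟩ := h
  obtain ⟨t₀, ht₀⟩ : ∃ t₀, x t₀ i₀ ≠ 0 := by
    by_contra! hx
    exact hi₀ (funext₂ fun j k => by simp [hT, hx])
  refine ⟨Fin.pos t₀, fun i => -(x t₀ i / x t₀ i₀), ?_⟩
  have hcard : Fintype.card {t // t ≠ t₀} = r - 1 := by simp
  rw [← hcard]
  refine hasDecomp_of_fintype (fun t i => x t i - x t₀ i / x t₀ i₀ * x t i₀) (fun t => y t)
    (fun t => z t) fun i j k => ?_
  have hx₀ : ∀ i, x t₀ i - x t₀ i / x t₀ i₀ * x t₀ i₀ = 0 := fun i => by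
    rw [div_mul_cancel₀ _ ht₀, sub_self]
  calc (T i + -(x t₀ i / x t₀ i₀) • T i₀) j k
      = ∑ t, (x t i - x t₀ i / x t₀ i₀ * x t i₀) * y t j * z t k := by
        simp only [Pi.add_apply, Pi.smul_apply, smul_eq_mul, hT, Finset.mul_sum,
          ← Finset.sum_add_distrib]
        exact Finset.sum_congr rfl fun t _ => by ring
    _ = _ := by rw [Fintype.sum_eq_add_sum_subtype_ne _ t₀, hx₀, zero_mul, zero_mul, zero_add]

theorem HasDecomp.exists_sub_card {ι : Type*} (g : ι → I) (s : Finset ι)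
    (hs : LinearIndepOn F (fun a => T (g a)) s) (h : HasDecomp T r) :
    s.card ≤ r ∧ ∃ T' : I → J → K → F, HasDecomp T' (r - s.card) ∧
      ∀ i, T' i - T i ∈ span F ((fun a => T (g a)) '' s) := by
  classical
  induction s using Finset.induction_on with
  | empty => exact ⟨Nat.zero_le _, T, h, fun i => by simp⟩
  | insert a s ha ih =>
    rw [Finset.coe_insert, linearIndepOn_insert ha] at hs
    obtain ⟨hcard, T', hT', hsub⟩ := ih hs.1
    have hmono : span F ((fun a => T (g a)) '' s) ≤ span F ((fun a => T (g a)) '' insert a s) :=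
      span_mono (image_mono (subset_insert _ _))
    have ha_mem : T (g a) ∈ span F ((fun a => T (g a)) '' insert a s) :=
      subset_span ⟨a, mem_insert _ _, rfl⟩
    -- `T' (g a) ≡ T (g a)` modulo the span of the rows already eliminated
    have hT'a : T' (g a) ≠ 0 := fun h0 =>
      hs.2 (by simpa [h0] using neg_mem (hsub (g a)))
    obtain ⟨hr, μ, hT''⟩ := hT'.exists_sub_one_of_ne_zero hT'a
    refine ⟨by rw [Finset.card_insert_of_notMem ha]; omega, fun i => T' i + μ i • T' (g a), ?_,
      fun i => ?_⟩
    · rwa [Finset.card_insert_of_notMem ha, ← Nat.sub_sub]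
    · rw [show T' i + μ i • T' (g a) - T i
          = (T' i - T i) + μ i • (T' (g a) - T (g a)) + μ i • T (g a) by module,
        Finset.coe_insert]
      exact add_mem (add_mem (hmono (hsub i)) (smul_mem _ _ (hmono (hsub _))))
        (smul_mem _ _ ha_mem)

theorem HasDecomp.exists_sub_card_of_linearIndependent {ι : Type*} [Fintype ι] (g : ι → I)
    (hg : LinearIndependent F (fun a => T (g a))) (h : HasDecomp T r) :
    Fintype.card ι ≤ r ∧ ∃ T' : I → J → K → F, HasDecomp T' (r - Fintype.card ι) ∧
      ∀ i, T' i - T i ∈ span F (range fun a => T (g a)) := by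
  simpa using h.exists_sub_card g Finset.univ (by simpa using hg)

end Field

end Decomposition

theorem le_tRank {F : Type} [Field F] {I J K : Type} [Fintype I] [Fintype J] [Fintype K]
    {T : I → J → K → F} {b : ℕ} (h : ∀ r, HasDecomp T r → b ≤ r) : b ≤ tRank F T :=
  le_csInf ⟨_, hasDecomp_card_prod T⟩ h

section Arec

variable (F : Type) [Field F] (m : ℕ)

theorem card_ArecIdx_zero : Fintype.card (ArecIdx m 0) = m :=
  Fintype.card_fin m

theorem card_ArecIdx_succ (i : ℕ) :
    Fintype.card (ArecIdx m (i + 1)) = 2 * Fintype.card (ArecIdx m i) :=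
  Fintype.card_prod (Fin 2) (ArecIdx m i)

theorem card_ArecIdx (i : ℕ) : Fintype.card (ArecIdx m i) = m * 2 ^ i := by
  induction i with
  | zero => rw [card_ArecIdx_zero, pow_zero, mul_one]
  | succ i ih => rw [card_ArecIdx_succ, ih, pow_succ]; ring

theorem card_ArecSl (i : ℕ) : Fintype.card (ArecSl i) = 2 ^ i := by
  induction i with
  | zero => exact Fintype.card_fin 1
  | succ i ih =>
    rw [pow_succ, ← ih, mul_comm]
    exact Fintype.card_prod (Fin 2) (ArecSl i)

theorem sum_ArecIdx_succ {M : Type*} [AddCommMonoid M] {i : ℕ} (f : ArecIdx m (i + 1) → M) :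
    ∑ p, f p = ∑ x, f (0, x) + ∑ x, f (1, x) :=
  (Fintype.sum_prod_type (f := f)).trans (Fin.sum_univ_two _)

theorem Arec_comm (i : ℕ) (x y : ArecIdx m i) (e : ArecSl i) :
    Arec F m i x y e = Arec F m i y x e := by
  induction i with
  | zero => simp only [Arec, eq_comm]
  | succ i ih =>
    obtain ⟨a, x⟩ := x
    obtain ⟨b, y⟩ := y
    simp only [Arec, ih x y]
    split_ifs <;> first | rfl | tauto

theorem linearIndependent_Arec (i : ℕ) : LinearIndependent F (Arec F m i) := by
  rw [Fintype.linearIndependent_iff₂]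
  induction i with
  | zero => exact fun c hc x => by simpa [Arec] using hc x (0 : Fin 1)
  | succ i ih =>
    intro c hc
    have h₀ : ∀ x, c (0, x) = 0 := ih _ fun y e => by
      simpa [sum_ArecIdx_succ, Arec] using hc (1, y) (1, e)
    have h₁ : ∀ x, c (1, x) = 0 := ih _ fun y e => by
      simpa [sum_ArecIdx_succ, Arec] using hc (0, y) (1, e)
    rintro ⟨a, x⟩
    fin_cases a
    exacts [h₀ x, h₁ x]

theorem HasDecomp.of_Arec_succ {i r : ℕ} (h : HasDecomp (Arec F m (i + 1)) r) :
    2 * Fintype.card (ArecIdx m i) ≤ r ∧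
      HasDecomp (Arec F m i) (r - 2 * Fintype.card (ArecIdx m i)) := by
  have hA := Fintype.linearIndependent_iff₂.mp (linearIndependent_Arec F m i)
  have hrows : LinearIndependent F fun x : ArecIdx m i => Arec F m (i + 1) (1, x) :=
    Fintype.linearIndependent_iff₂.mpr fun c hc => hA c fun y e => by
      simpa [Arec] using hc (0, y) (1, e)
  obtain ⟨hN₁, T₁, hT₁, hsub₁⟩ :=
    h.exists_sub_card_of_linearIndependent (I := ArecIdx m (i + 1)) _ hrows
  -- Stated at pairs `(δ, e)`: `ArecSl (i + 1)` is only semireducibly `Fin 2 × ArecSl i`,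
  -- so `simp` could not rewrite with it at a variable `k : ArecSl (i + 1)`.
  have hT₁_right : ∀ x b (δ : Fin 2) e,
      T₁ (0, x) (1, b) (δ, e) = Arec F m (i + 1) (0, x) (1, b) (δ, e) := fun x b δ e =>
    apply_apply_eq_of_sub_mem_span (fun a => by simp [Arec]) (hsub₁ _)
  have hT₁_left : ∀ x y e, T₁ (0, x) (0, y) (0, e) = Arec F m i x y e := fun x y e =>
    (apply_apply_eq_of_sub_mem_span (fun a => by simp [Arec]) (hsub₁ _)).trans (by simp [Arec])
  set U : ArecIdx m (i + 1) → ArecIdx m i → ArecSl (i + 1) → F := fun q x k => T₁ (0, x) q k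
  have hU : HasDecomp U _ := (hT₁.comp (fun x => (0, x)) id id).swap
  have hcols : LinearIndependent F fun b : ArecIdx m i => U (1, b) :=
    Fintype.linearIndependent_iff₂.mpr fun c hc => hA c fun y e => by
      simpa [U, hT₁_right, Arec, Arec_comm F m i y] using hc y (1, e)
  obtain ⟨hN₂, U', hU', hsub₂⟩ := hU.exists_sub_card_of_linearIndependent _ hcols
  have hU'_eq : (fun x y e => U' (0, y) x (0, e)) = Arec F m i := by
    funext x y e
    refine (apply_apply_eq_of_sub_mem_span (fun b => ?_) (hsub₂ _)).trans (hT₁_left x y e)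
    simp [U, hT₁_right, Arec]
  refine ⟨by omega, ?_⟩
  rw [← hU'_eq, two_mul, ← Nat.sub_sub]
  exact (hU'.comp (fun y => (0, y)) id fun e => (0, e)).swap

theorem HasDecomp.two_mul_card_ArecIdx_le {i r : ℕ} (h : HasDecomp (Arec F m i) r) :
    2 * Fintype.card (ArecIdx m i) ≤ r + m := by
  induction i generalizing r with
  | zero =>
    have := (h.exists_sub_card_of_linearIndependent id (linearIndependent_Arec F m 0)).1
    rw [card_ArecIdx_zero] at this ⊢
    omega
  | succ i ih =>
    obtain ⟨hle, h'⟩ := h.of_Arec_succ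
    have := ih h'
    rw [card_ArecIdx_succ]
    omega

end Arec

theorem arec_final_rank (F : Type) [Field F] (n k l : ℕ) (hk : 1 ≤ k) (hn : n = 2 ^ l) :
    Fintype.card (ArecIdx (n ^ (k - 1)) l) = n ^ k ∧
    Fintype.card (ArecSl l) = n ∧
    2 * n ^ k - n ^ (k - 1) ≤ tRank F (Arec F (n ^ (k - 1)) l) := by
  have hcard : Fintype.card (ArecIdx (n ^ (k - 1)) l) = n ^ k := by
    rw [card_ArecIdx, ← hn, ← pow_succ, Nat.sub_add_cancel hk]
  refine ⟨hcard, by rw [card_ArecSl, hn], ?_⟩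
  rw [← hcard]
  exact le_tRank fun r hr => Nat.sub_le_of_le_add (hr.two_mul_card_ArecIdx_le F _)
end

section
/- Let G(s) = [G1(s) G2(s)] be a nondegenerate characteristic matrix partitioned into two column blocks. Then R[G] ≥ min over matrices M of R[G1(s) + G2(s)M] + (column rank of G2(s)). -/
open scoped BigOperators

/-!
Take an optimal decomposition `G = ∑_{t < r} x_t ⊗ y_t ⊗ z_t` and split each `y_t = (y₁_t, y₂_t)`
along the column blocks. Then `G₂(s) = X(s) Y₂` with `Y₂` the constant matrix whose rows are the
`y₂_t`, so the column rank of `G₂(s)` is at most the dimension `d` of the span of the `y₂_t`.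
Choose `d` indices `t` with linearly independent `y₂_t`; for them the linear system
`y₁_t + y₂_t M = 0` is solvable, and then `G₁ + G₂ M = ∑_t x_t ⊗ (y₁_t + y₂_t M) ⊗ z_t` has at most
`r - d` nonzero terms.
-/

section Decomposition

variable {F : Type} [Field F] {I J K ι : Type}

def IsTensorDecomposition [Fintype ι] (A : I → J → K → F) (x : ι → I → F) (y : ι → J → F)
    (z : ι → K → F) : Prop :=
  ∀ i j k, A i j k = ∑ t, x t i * y t j * z t k

theorem isTensorDecomposition_slices [Fintype I] [Fintype J] [DecidableEq I] [DecidableEq J]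
    (A : I → J → K → F) :
    IsTensorDecomposition A (fun p : I × J => Pi.single p.1 1) (fun p => Pi.single p.2 1)
      (fun p => A p.1 p.2) := by
  intro i j k
  simp [Fintype.sum_prod_type, Pi.single_apply]

variable [Fintype ι] {A : I → J → K → F} {x : ι → I → F} {y : ι → J → F} {z : ι → K → F}

theorem IsTensorDecomposition.card_mem (h : IsTensorDecomposition A x y z) :
    Fintype.card ι ∈ {m | ∃ x : Fin m → I → F, ∃ y : Fin m → J → F, ∃ z : Fin m → K → F,
      IsTensorDecomposition A x y z} := by
  set e := (Fintype.equivFin ι).symm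
  refine ⟨fun t => x (e t), fun t => y (e t), fun t => z (e t), fun i j k => ?_⟩
  rw [h i j k]
  exact (e.sum_comp fun t => x t i * y t j * z t k).symm

theorem IsTensorDecomposition.add_sum_mul {J' : Type} [Fintype J'] {A' : I → J' → K → F}
    {y' : ι → J' → F} (h : IsTensorDecomposition A x y z) (h' : IsTensorDecomposition A' x y' z)
    (M : J' → J → F) :
    IsTensorDecomposition (fun i j k => A i j k + ∑ j', A' i j' k * M j' j) x
      (fun t j => y t j + ∑ j', y' t j' * M j' j) z := by
  intro i j k
  simp only [h i j k, h' i _ k, mul_add, add_mul, Finset.sum_add_distrib, Finset.mul_sum,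
    Finset.sum_mul]
  rw [Finset.sum_comm (f := fun j' t => _)]
  congr 1
  refine Finset.sum_congr rfl fun t _ => Finset.sum_congr rfl fun j' _ => by ring

variable [Fintype I] [Fintype J] [Fintype K]

theorem IsTensorDecomposition.tRank_le (h : IsTensorDecomposition A x y z) :
    tRank F A ≤ Fintype.card ι :=
  Nat.sInf_le h.card_mem

theorem exists_isTensorDecomposition_tRank (A : I → J → K → F) :
    ∃ x : Fin (tRank F A) → I → F, ∃ y : Fin (tRank F A) → J → F,
      ∃ z : Fin (tRank F A) → K → F, IsTensorDecomposition A x y z := by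
  classical
  exact Nat.sInf_mem ⟨_, (isTensorDecomposition_slices A).card_mem⟩

theorem IsTensorDecomposition.tRank_le_card_sub {κ : Type} [Fintype κ]
    (h : IsTensorDecomposition A x y z) {e : κ → ι} (he : Function.Injective e)
    (hy : ∀ u, y (e u) = 0) : tRank F A ≤ Fintype.card ι - Fintype.card κ := by
  classical
  have hsupp : IsTensorDecomposition A (fun t : {t // t ∉ Set.range e} => x t) (fun t => y t)
      (fun t => z t) := by
    intro i j k
    rw [h i j k, ← Fintype.sum_subtype_add_sum_subtype (· ∈ Set.range e),
      Finset.sum_eq_zero, zero_add]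
    rintro ⟨_, u, rfl⟩ -
    simp [hy u]
  calc tRank F A ≤ _ := hsupp.tRank_le
    _ = _ := by rw [Fintype.card_subtype_compl, Set.card_range_of_injective he]

open MvPolynomial in
theorem colRank_le_card (w : ι → I → K → F) (y : ι → J → F)
    (h : ∀ i j k, A i j k = ∑ u, w u i k * y u j) : colRank F A ≤ Fintype.card ι := by
  let P : Matrix I ι (MvPolynomial K F) := Matrix.of fun i u => ∑ k, X k * C (w u i k)
  let Q : Matrix ι J (MvPolynomial K F) := Matrix.of fun u j => C (y u j)
  have hPQ : charMatrix A = P * Q := by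
    refine Matrix.ext fun i j => ?_
    simp only [charMatrix, P, Q, Matrix.of_apply, Matrix.mul_apply, h, map_sum, map_mul,
      Finset.mul_sum, Finset.sum_mul]
    rw [Finset.sum_comm]
    refine Finset.sum_congr rfl fun u _ => Finset.sum_congr rfl fun k _ => by ring
  calc colRank F A
      = ((charMatrix A).map (algebraMap _ (FractionRing (MvPolynomial K F)))).rank := rfl
    _ ≤ Fintype.card ι := by
      rw [hPQ, Matrix.map_mul]
      exact (Matrix.rank_mul_le_right _ _).trans (Matrix.rank_le_card_height _)

theorem IsTensorDecomposition.colRank_le_finrank_span (h : IsTensorDecomposition A x y z) :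
    colRank F A ≤ Module.finrank F (Submodule.span F (Set.range y)) := by
  set V := Submodule.span F (Set.range y)
  set β := Module.finBasis F V
  set c : ι → Fin (Module.finrank F V) → F :=
    fun t => β.repr ⟨y t, Submodule.subset_span ⟨t, rfl⟩⟩
  have hy : ∀ t j, y t j = ∑ u, c t u * (β u : J → F) j := fun t j => by
    have := congrArg (fun v : V => (v : J → F) j)
      (β.sum_repr ⟨y t, Submodule.subset_span ⟨t, rfl⟩⟩)
    simp only [Submodule.coe_sum, Submodule.coe_smul, Finset.sum_apply, Pi.smul_apply,
      smul_eq_mul] at this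
    exact this.symm
  refine (colRank_le_card (fun u i k => ∑ t, c t u * x t i * z t k) (fun u => (β u : J → F))
    fun i j k => ?_).trans_eq (Fintype.card_fin _)
  simp only [h i j k, hy, Finset.mul_sum, Finset.sum_mul]
  rw [Finset.sum_comm]
  refine Finset.sum_congr rfl fun u _ => Finset.sum_congr rfl fun t _ => by ring

end Decomposition

theorem Matrix.mulVec_surjective_of_linearIndependent_row {m n K : Type} [Field K] [Fintype m]
    [Fintype n] {A : Matrix m n K} (h : LinearIndependent K A.row) :
    Function.Surjective A.mulVec := by
  have : LinearMap.range A.mulVecLin = ⊤ := Submodule.eq_top_of_finrank_eq <| by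
    rw [← Matrix.rank, h.rank_matrix, Module.finrank_fintype_fun_eq_card]
  exact LinearMap.range_eq_top.mp this

theorem exists_add_sum_mul_eq_zero {F κ J J' : Type} [Field F] [Fintype κ] [Fintype J']
    (y : κ → J → F) {y' : κ → J' → F} (hy' : LinearIndependent F y') :
    ∃ M : J' → J → F, ∀ u j, y u j + ∑ j', y' u j' * M j' j = 0 := by
  choose v hv using fun j =>
    Matrix.mulVec_surjective_of_linearIndependent_row (A := Matrix.of y') hy' fun u => -y u j
  refine ⟨fun j' j => v j j', fun u j => ?_⟩
  have := congrFun (hv j) u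
  simp only [Matrix.mulVec, dotProduct, Matrix.of_apply] at this
  rw [this, add_neg_cancel]

theorem partitioning_column_blocks_general (F : Type) [Field F] {a b b' c : ℕ}
    (G1 : Fin a → Fin b → Fin c → F) (G2 : Fin a → Fin b' → Fin c → F) :
    sInf (Set.range fun M : Fin b' → Fin b → F =>
        tRank F (fun i j k => G1 i j k + ∑ j', G2 i j' k * M j' j)) +
      colRank F G2 ≤
    tRank F (fun (i : Fin a) (j : Fin (b + b')) (k : Fin c) =>
      Fin.addCases (fun j1 => G1 i j1 k) (fun j2 => G2 i j2 k) j) := by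
  set G : Fin a → Fin (b + b') → Fin c → F := fun i j k =>
    Fin.addCases (fun j1 => G1 i j1 k) (fun j2 => G2 i j2 k) j
  obtain ⟨x, y, z, hG⟩ := exists_isTensorDecomposition_tRank G
  set y₁ := fun t (j : Fin b) => y t (Fin.castAdd b' j)
  set y₂ := fun t (j : Fin b') => y t (Fin.natAdd b j)
  have h₁ : IsTensorDecomposition G1 x y₁ z := fun i j k => by
    simpa [G, y₁] using hG i (Fin.castAdd b' j) k
  have h₂ : IsTensorDecomposition G2 x y₂ z := fun i j k => by
    simpa [G, y₂] using hG i (Fin.natAdd b j) k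
  obtain ⟨κ, e, he, hspan, hli⟩ := exists_linearIndependent' F y₂
  have := Finite.of_injective e he
  have := Fintype.ofFinite κ
  have hcol : colRank F G2 ≤ Fintype.card κ := by
    rw [← finrank_span_eq_card hli, hspan]
    exact h₂.colRank_le_finrank_span
  obtain ⟨M, hM⟩ := exists_add_sum_mul_eq_zero (y₁ ∘ e) hli
  have hrank := (h₁.add_sum_mul h₂ M).tRank_le_card_sub he fun u => funext (hM u)
  have hκ := Fintype.card_le_of_injective e he
  rw [Fintype.card_fin] at hrank hκ
  calc _ ≤ (tRank F G - Fintype.card κ) + Fintype.card κ :=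
        add_le_add ((Nat.sInf_le (Set.mem_range_self M)).trans hrank) hcol
    _ = _ := Nat.sub_add_cancel hκ

/-- Brockett–Dobkin partitioning, column-block case:
`R[G1 G2] ≥ min_M R[G1(s) + G2(s)M] + column rank of G2(s)`. -/
theorem partitioning_column_blocks (F : Type) [Field F] {a b b' c : ℕ}
    (G1 : Fin a → Fin b → Fin c → F) (G2 : Fin a → Fin b' → Fin c → F)
    (hG : Nondeg F (fun (i : Fin a) (j : Fin (b + b')) (k : Fin c) =>
      Fin.addCases (fun j1 => G1 i j1 k) (fun j2 => G2 i j2 k) j)) :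
    sInf (Set.range fun M : Fin b' → Fin b → F =>
        tRank F (fun i j k => G1 i j k + ∑ j', G2 i j' k * M j' j)) +
      colRank F G2 ≤
    tRank F (fun (i : Fin a) (j : Fin (b + b')) (k : Fin c) =>
      Fin.addCases (fun j1 => G1 i j1 k) (fun j2 => G2 i j2 k) j) :=
  partitioning_column_blocks_general F G1 G2
end
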